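/- arXiv:2509.04749 — 2 statements merged into one kernel-verified Lean document; each statement's English description precedes it below -/
import Mathlib

section
/- Let β > 0, c ∈ (0,1) and α ∈ [0,1). Then there exists a unique pair (x*, θ*) ∈ ℝ × ℝ satisfying simultaneously the citizen indifference condition Φ(√β·(θ* − x*)) = c and the regime indifference condition θ* = α + (1 − α)·Φ(√β·(x* − θ*)). -/
open Real Set MeasureTheory

/-- The standard normal density `φ(t) = exp(−t²/2)/√(2π)`. -/
noncomputable def stdNormalPDF (t : ℝ) : ℝ :=
  Real.exp (-(t ^ 2) / 2) / Real.sqrt (2 * Real.pi)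

/-- The standard normal cumulative distribution function `Φ`. -/
noncomputable def stdNormalCDF (x : ℝ) : ℝ :=
  ∫ t in Set.Iic x, stdNormalPDF t

/-!
The citizen condition alone pins down `t = √β (θ* − x*)`: `Φ` is a continuous, strictly
increasing map of `ℝ` onto `(0, 1)`, so `Φ t = c` has exactly one solution. Since
`√β (x* − θ*) = −t`, the regime condition then gives `θ* = α + (1 − α) Φ(−t)` outright,
and `x* = θ* − t / √β`.
-/

open ProbabilityTheory Filter Topology

lemma stdNormalPDF_eq_gaussianPDFReal : stdNormalPDF = gaussianPDFReal 0 1 := by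
  funext t
  simp only [stdNormalPDF, gaussianPDFReal, NNReal.coe_one, mul_one, sub_zero, div_eq_inv_mul]

lemma integrable_stdNormalPDF : Integrable stdNormalPDF := by
  rw [stdNormalPDF_eq_gaussianPDFReal]
  exact integrable_gaussianPDFReal 0 1

lemma stdNormalPDF_pos (t : ℝ) : 0 < stdNormalPDF t := by
  rw [stdNormalPDF_eq_gaussianPDFReal]
  exact gaussianPDFReal_pos 0 1 t one_ne_zero

lemma stdNormalCDF_eq_cdf_gaussianReal : stdNormalCDF = cdf (gaussianReal 0 1) := by
  funext x
  have h := ofReal_cdf (gaussianReal 0 1) x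
  rw [gaussianReal_apply_eq_integral 0 one_ne_zero, ← stdNormalPDF_eq_gaussianPDFReal,
    ENNReal.ofReal_eq_ofReal_iff (cdf_nonneg _ x)
      (setIntegral_nonneg measurableSet_Iic fun t _ => (stdNormalPDF_pos t).le)] at h
  exact h.symm

lemma stdNormalCDF_sub_stdNormalCDF (a b : ℝ) :
    stdNormalCDF b - stdNormalCDF a = ∫ t in a..b, stdNormalPDF t :=
  intervalIntegral.integral_Iic_sub_Iic integrable_stdNormalPDF.integrableOn
    integrable_stdNormalPDF.integrableOn

lemma strictMono_stdNormalCDF : StrictMono stdNormalCDF := fun a b hab => by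
  have h := stdNormalCDF_sub_stdNormalCDF a b
  have hpos : 0 < ∫ t in a..b, stdNormalPDF t :=
    intervalIntegral.intervalIntegral_pos_of_pos integrable_stdNormalPDF.intervalIntegrable
      stdNormalPDF_pos hab
  linarith

lemma continuous_stdNormalCDF : Continuous stdNormalCDF := by
  have h : stdNormalCDF = fun x => stdNormalCDF 0 + ∫ t in (0 : ℝ)..x, stdNormalPDF t := by
    funext x
    linarith [stdNormalCDF_sub_stdNormalCDF 0 x]
  rw [h]
  exact continuous_const.add <| intervalIntegral.continuous_primitive
    (fun _ _ => integrable_stdNormalPDF.intervalIntegrable) 0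

lemma tendsto_stdNormalCDF_atBot : Tendsto stdNormalCDF atBot (𝓝 0) := by
  rw [stdNormalCDF_eq_cdf_gaussianReal]
  exact tendsto_cdf_atBot _

lemma tendsto_stdNormalCDF_atTop : Tendsto stdNormalCDF atTop (𝓝 1) := by
  rw [stdNormalCDF_eq_cdf_gaussianReal]
  exact tendsto_cdf_atTop _

lemma existsUnique_stdNormalCDF_eq {c : ℝ} (hc : c ∈ Ioo (0 : ℝ) 1) :
    ∃! t, stdNormalCDF t = c := by
  obtain ⟨a, ha⟩ := (tendsto_stdNormalCDF_atBot.eventually_lt_const hc.1).exists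
  obtain ⟨b, hb⟩ := (tendsto_stdNormalCDF_atTop.eventually_const_lt hc.2).exists
  obtain ⟨t, ht⟩ :=
    mem_range_of_exists_le_of_exists_ge continuous_stdNormalCDF ⟨a, ha.le⟩ ⟨b, hb.le⟩
  exact ⟨t, ht, fun u hu => strictMono_stdNormalCDF.injective (hu.trans ht.symm)⟩

lemma existsUnique_pair_of_existsUnique {f g : ℝ → ℝ} {s c : ℝ} (hs : s ≠ 0)
    (hf : ∃! t, f t = c) :
    ∃! p : ℝ × ℝ, f (s * (p.2 - p.1)) = c ∧ p.2 = g (s * (p.1 - p.2)) := by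
  obtain ⟨t, ht, ht_unique⟩ := hf
  have hdiff : ∀ x θ : ℝ, s * (θ - x) = t ↔ x = θ - t / s := fun x θ => by
    rw [eq_sub_iff_add_eq, ← eq_sub_iff_add_eq', eq_comm, div_eq_iff hs, mul_comm, eq_comm]
  have hneg : ∀ x θ : ℝ, s * (θ - x) = t → s * (x - θ) = -t := fun x θ h => by
    rw [← h]; ring
  refine ⟨(g (-t) - t / s, g (-t)), ?_, ?_⟩
  · have h : s * (g (-t) - (g (-t) - t / s)) = t := (hdiff _ _).2 rfl
    exact ⟨by simp only [h, ht], by simp only [hneg _ _ h]⟩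
  · rintro ⟨x, θ⟩ ⟨hf, hg⟩
    have h : s * (θ - x) = t := ht_unique _ hf
    have hθ : θ = g (-t) := by simpa only [hneg _ _ h] using hg
    rw [(hdiff x θ).1 h, hθ]

theorem benchmark_equilibrium_exists_unique_general
    (β c α : ℝ) (hβ : 0 < β) (hc : c ∈ Set.Ioo (0 : ℝ) 1) :
    ∃! p : ℝ × ℝ,
      stdNormalCDF (Real.sqrt β * (p.2 - p.1)) = c ∧
      p.2 = α + (1 - α) * stdNormalCDF (Real.sqrt β * (p.1 - p.2)) :=
  existsUnique_pair_of_existsUnique (g := fun u => α + (1 - α) * stdNormalCDF u)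
    (Real.sqrt_pos.2 hβ).ne' (existsUnique_stdNormalCDF_eq hc)

/-- For `β > 0`, `c ∈ (0,1)`, `α ∈ [0,1)`, there is a unique pair
`(x*, θ*)` satisfying the citizen indifference condition `Φ(√β(θ* − x*)) = c` and the
regime indifference condition `θ* = α + (1 − α)Φ(√β(x* − θ*))`. -/
theorem benchmark_equilibrium_exists_unique
    (β c α : ℝ) (hβ : 0 < β) (hc : c ∈ Set.Ioo (0 : ℝ) 1) (hα : α ∈ Set.Ico (0 : ℝ) 1) :
    ∃! p : ℝ × ℝ,
      stdNormalCDF (Real.sqrt β * (p.2 - p.1)) = c ∧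
      p.2 = α + (1 - α) * stdNormalCDF (Real.sqrt β * (p.1 - p.2)) :=
  benchmark_equilibrium_exists_unique_general β c α hβ hc
end

section
/- The function r ↦ r·(√(1 + 4r²) − 2r) is strictly increasing on (0, ∞). Consequently, for each fixed β > 0, the common equilibrium propaganda and counter-propaganda level y* = z* = r·√(2β/π)·(√(1 + 4r²) − 2r) is strictly increasing in the benefit-cost ratio r = B/ψ, and for each fixed r > 0 it is strictly increasing in the signal precision β. -/
/-!
Rationalising, `r (√(1 + 4r²) − 2r) = 1 / (√(r⁻² + 4) + 2)`, which visibly increases with `r > 0`.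
The equilibrium level is this quantity times the factor `√(2β/π)`, which is positive and
increasing in `β`, while `√(1 + 4r²) − 2r > 0`.
-/

open Real Set

lemma two_mul_lt_sqrt_one_add_four_mul_sq (r : ℝ) : 2 * r < √(1 + 4 * r ^ 2) :=
  lt_sqrt_of_sq_lt (by linarith [mul_pow 2 r 2])

lemma mul_sqrt_one_add_four_mul_sq_sub_eq {r : ℝ} (hr : 0 < r) :
    r * (√(1 + 4 * r ^ 2) - 2 * r) = 1 / (√((r ^ 2)⁻¹ + 4) + 2) := by
  set s := √((r ^ 2)⁻¹ + 4)
  have hr_inv : r ^ 2 * (r ^ 2)⁻¹ = 1 := mul_inv_cancel₀ (by positivity)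
  have hs_sq : s ^ 2 = (r ^ 2)⁻¹ + 4 := sq_sqrt (by positivity)
  have hsqrt : √(1 + 4 * r ^ 2) = r * s := by
    conv_rhs => rw [← sqrt_sq hr.le, ← sqrt_mul (sq_nonneg r)]
    congr 1
    linear_combination -hr_inv
  rw [hsqrt, eq_div_iff (by positivity)]
  linear_combination r ^ 2 * hs_sq + hr_inv

theorem strictMonoOn_mul_sqrt_one_add_four_mul_sq_sub :
    StrictMonoOn (fun r : ℝ => r * (√(1 + 4 * r ^ 2) - 2 * r)) (Ioi 0) := by
  intro a ha b hb hab
  have ha : 0 < a := ha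
  simp only [mul_sqrt_one_add_four_mul_sq_sub_eq ha, mul_sqrt_one_add_four_mul_sq_sub_eq hb]
  gcongr

/-- `r ↦ r(√(1 + 4r²) − 2r)` is strictly increasing on `(0, ∞)`;
hence the equilibrium communication level `y* = z* = r√(2β/π)(√(1+4r²) − 2r)` is
strictly increasing in `r` for each fixed `β > 0`, and strictly increasing in `β`
for each fixed `r > 0`. -/
theorem communication_level_monotonicity :
    StrictMonoOn (fun r : ℝ => r * (Real.sqrt (1 + 4 * r ^ 2) - 2 * r))
      (Set.Ioi (0 : ℝ)) ∧
    (∀ β : ℝ, 0 < β →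
      StrictMonoOn
        (fun r : ℝ =>
          r * Real.sqrt (2 * β / Real.pi) * (Real.sqrt (1 + 4 * r ^ 2) - 2 * r))
        (Set.Ioi (0 : ℝ))) ∧
    (∀ r : ℝ, 0 < r →
      StrictMonoOn
        (fun β : ℝ =>
          r * Real.sqrt (2 * β / Real.pi) * (Real.sqrt (1 + 4 * r ^ 2) - 2 * r))
        (Set.Ioi (0 : ℝ))) := by
  refine ⟨strictMonoOn_mul_sqrt_one_add_four_mul_sq_sub, ?_, ?_⟩
  · intro β hβ a ha b hb hab
    have hfactor : 0 < √(2 * β / π) := by positivity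
    simpa only [mul_right_comm _ √(2 * β / π)] using
      mul_lt_mul_of_pos_right (strictMonoOn_mul_sqrt_one_add_four_mul_sq_sub ha hb hab) hfactor
  · intro r hr β₁ hβ₁ β₂ hβ₂ hlt
    have hβ₁ : 0 < β₁ := hβ₁
    have hgap : 0 < √(1 + 4 * r ^ 2) - 2 * r := sub_pos.2 (two_mul_lt_sqrt_one_add_four_mul_sq r)
    have hsqrt : √(2 * β₁ / π) < √(2 * β₂ / π) := sqrt_lt_sqrt (by positivity) (by gcongr)
    exact mul_lt_mul_of_pos_right (mul_lt_mul_of_pos_left hsqrt hr) hgap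
end
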